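/- If (M_n)_{n∈ℕ} is an infinite sequence of EPCF programs with M_n →wh M_{n+1} for all n, then for every index i there exists j > i with M_i ↠wh M_j and M_i↓ →PCF M_j↓. Consequently, an EPCF program with an infinite weak head reduction path has a collapse with an infinite PCF reduction path. -/

import Mathlib

inductive Tm : Type
  | var : String → Tm
  | app : Tm → Tm → Tm
  | lam : String → Tm → Tm
  | fixp : Tm → Tm
  | esub : Tm → String → Tm → Tm
  | zero : Tm
  | pred : Tm → Tm
  | succ : Tm → Tm
  | ifz : Tm → Tm → Tm → Tm

/-- Numerals `n̲ = succⁿ 0`. -/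
def numeral : ℕ → Tm
  | 0 => Tm.zero
  | n + 1 => Tm.succ (numeral n)

/-- Free variables of an EPCF term. -/
def fv : Tm → Finset String
  | .var x => {x}
  | .app M N => fv M ∪ fv N
  | .lam x M => fv M \ {x}
  | .fixp M => fv M
  | .esub M x N => (fv M \ {x}) ∪ fv N
  | .zero => ∅
  | .pred M => fv M
  | .succ M => fv M
  | .ifz L M N => fv L ∪ fv M ∪ fv N

/-- Substitution `M[x := Q]` (capture-free whenever `Q` is closed, which is
the only situation in which it is used for programs). -/
def subst (x : String) (Q : Tm) : Tm → Tm
  | .var y => if y = x then Q else .var y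
  | .app M N => .app (subst x Q M) (subst x Q N)
  | .lam y M => if y = x then .lam y M else .lam y (subst x Q M)
  | .fixp M => .fixp (subst x Q M)
  | .esub M y N =>
      if y = x then .esub M y (subst x Q N)
      else .esub (subst x Q M) y (subst x Q N)
  | .zero => .zero
  | .pred M => .pred (subst x Q M)
  | .succ M => .succ (subst x Q M)
  | .ifz L M N => .ifz (subst x Q L) (subst x Q M) (subst x Q N)

/-- PCF terms are the EPCF terms without explicit substitutions. -/
def IsPCF : Tm → Prop
  | .var _ => True
  | .app M N => IsPCF M ∧ IsPCF N
  | .lam _ M => IsPCF M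
  | .fixp M => IsPCF M
  | .esub _ _ _ => False
  | .zero => True
  | .pred M => IsPCF M
  | .succ M => IsPCF M
  | .ifz L M N => IsPCF L ∧ IsPCF M ∧ IsPCF N

/-- All explicit substitutions occurring in the term have closed right-hand sides. -/
def closedSubs : Tm → Prop
  | .var _ => True
  | .app M N => closedSubs M ∧ closedSubs N
  | .lam _ M => closedSubs M
  | .fixp M => closedSubs M
  | .esub M _ N => closedSubs M ∧ closedSubs N ∧ fv N = ∅
  | .zero => True
  | .pred M => closedSubs M
  | .succ M => closedSubs M
  | .ifz L M N => closedSubs L ∧ closedSubs M ∧ closedSubs N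

/-- An EPCF program: closed, and all explicit substitutions have closed bodies. -/
def IsProgram (M : Tm) : Prop := fv M = ∅ ∧ closedSubs M

/-- The collapse `M↓`, performing all explicit substitutions. -/
def collapse : Tm → Tm
  | .var x => .var x
  | .app M N => .app (collapse M) (collapse N)
  | .lam x M => .lam x (collapse M)
  | .fixp M => .fixp (collapse M)
  | .esub M x N => subst x (collapse N) (collapse M)
  | .zero => .zero
  | .pred M => .pred (collapse M)
  | .succ M => .succ (collapse M)
  | .ifz L M N => .ifz (collapse L) (collapse M) (collapse N)

/-- Lists of explicit substitutions `σ = ⟨N₁/x₁⟩⋯⟨Nₙ/xₙ⟩`. -/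
abbrev Subs := List (String × Tm)

/-- `M^σ`: the term `M` under the list of explicit substitutions `σ`. -/
def applySubs (M : Tm) : Subs → Tm
  | [] => M
  | (x, N) :: σ => applySubs (.esub M x N) σ

def lookupS (x : String) : Subs → Option Tm
  | [] => none
  | (y, N) :: σ => if x = y then some N else lookupS x σ

/-- The variables in `σ` are pairwise distinct. -/
def keysDistinct (σ : Subs) : Prop := (σ.map Prod.fst).Nodup

/-- Computation redexes of EPCF. -/
inductive CrRedex : Tm → Tm → Prop
  | beta (x : String) (M N : Tm) (σ : Subs) (hk : keysDistinct σ) :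
      CrRedex (.app (applySubs (.lam x M) σ) N) (.esub (applySubs M σ) x N)
  | pred_zero : CrRedex (.pred .zero) .zero
  | pred_succ (n : ℕ) : CrRedex (.pred (numeral (n + 1))) (numeral n)
  | ifz_zero (M N : Tm) : CrRedex (.ifz .zero M N) M
  | ifz_succ (n : ℕ) (M N : Tm) : CrRedex (.ifz (numeral (n + 1)) M N) N
  | fix_unfold (M : Tm) : CrRedex (.fixp M) (.app M (.fixp M))

/-- Percolation redexes of EPCF (the list `σ` is non-empty). -/
inductive PrRedex : Tm → Tm → Prop
  | var_hit (x : String) (N : Tm) (σ : Subs) (hne : σ ≠ []) (hk : keysDistinct σ)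
      (h : lookupS x σ = some N) : PrRedex (applySubs (.var x) σ) N
  | var_miss (x : String) (σ : Subs) (hne : σ ≠ []) (hk : keysDistinct σ)
      (h : lookupS x σ = none) : PrRedex (applySubs (.var x) σ) (.var x)
  | zeroS (σ : Subs) (hne : σ ≠ []) (hk : keysDistinct σ) :
      PrRedex (applySubs .zero σ) .zero
  | appS (M N : Tm) (σ : Subs) (hne : σ ≠ []) (hk : keysDistinct σ) :
      PrRedex (applySubs (.app M N) σ) (.app (applySubs M σ) (applySubs N σ))
  | predS (M : Tm) (σ : Subs) (hne : σ ≠ []) (hk : keysDistinct σ) :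
      PrRedex (applySubs (.pred M) σ) (.pred (applySubs M σ))
  | succS (M : Tm) (σ : Subs) (hne : σ ≠ []) (hk : keysDistinct σ) :
      PrRedex (applySubs (.succ M) σ) (.succ (applySubs M σ))
  | ifzS (L M N : Tm) (σ : Subs) (hne : σ ≠ []) (hk : keysDistinct σ) :
      PrRedex (applySubs (.ifz L M N) σ)
        (.ifz (applySubs L σ) (applySubs M σ) (applySubs N σ))
  | fixS (M : Tm) (σ : Subs) (hne : σ ≠ []) (hk : keysDistinct σ) :
      PrRedex (applySubs (.fixp M) σ) (.fixp (applySubs M σ))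

/-- Evaluation contexts `E ::= □ | E·P | pred E | succ E | ifz E P Q`. -/
inductive ECtx : Type
  | hole : ECtx
  | appL : ECtx → Tm → ECtx
  | pred : ECtx → ECtx
  | succ : ECtx → ECtx
  | ifz : ECtx → Tm → Tm → ECtx

def fill : ECtx → Tm → Tm
  | .hole, M => M
  | .appL E P, M => .app (fill E M) P
  | .pred E, M => .pred (fill E M)
  | .succ E, M => .succ (fill E M)
  | .ifz E P Q, M => .ifz (fill E M) P Q

/-- One computation reduction step (under an evaluation context). -/
def CrStep (M N : Tm) : Prop :=
  ∃ E A B, CrRedex A B ∧ M = fill E A ∧ N = fill E B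

/-- One percolation reduction step (under an evaluation context). -/
def PrStep (M N : Tm) : Prop :=
  ∃ E A B, PrRedex A B ∧ M = fill E A ∧ N = fill E B

/-- One weak head reduction step. -/
def WhStep (M N : Tm) : Prop := CrStep M N ∨ PrStep M N

/-- Multistep weak head reduction. -/
def WhSteps : Tm → Tm → Prop := Relation.ReflTransGen WhStep

/-- PCF weak head redexes. -/
inductive PcfRedex : Tm → Tm → Prop
  | beta (x : String) (P Q : Tm) : PcfRedex (.app (.lam x P) Q) (subst x Q P)
  | fix_unfold (P : Tm) : PcfRedex (.fixp P) (.app P (.fixp P))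
  | pred_zero : PcfRedex (.pred .zero) .zero
  | pred_succ (n : ℕ) : PcfRedex (.pred (numeral (n + 1))) (numeral n)
  | ifz_zero (P Q : Tm) : PcfRedex (.ifz .zero P Q) P
  | ifz_succ (n : ℕ) (P Q : Tm) : PcfRedex (.ifz (numeral (n + 1)) P Q) Q

/-- One PCF weak head reduction step. -/
def PcfStep (M N : Tm) : Prop :=
  ∃ E A B, PcfRedex A B ∧ M = fill E A ∧ N = fill E B

/-- Multistep PCF weak head reduction. -/
def PcfSteps : Tm → Tm → Prop := Relation.ReflTransGen PcfStep

/-!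
Explicit substitutions weigh multiplicatively (`Tm.weight`), so a percolation step, which pushes
a list of substitutions one constructor down, strictly decreases the weight; it also leaves the
collapse unchanged. Hence an infinite weak head reduction performs a computation step after
finitely many percolation steps, and a computation step collapses to a PCF weak head step. The
one exception is a β-step whose λ-bound variable is already bound by the substitutions it passes
through: it yields a term whose head substitutions bind a variable twice, and no redex matches
such a term, which an infinite reduction rules out.
-/

def Tm.weight : Tm → ℕ
  | .var _ => 1
  | .app M N => M.weight + N.weight + 1
  | .lam _ M => M.weight + 1
  | .fixp M => M.weight + 1
  | .esub M _ N => M.weight * (N.weight + 1)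
  | .zero => 1
  | .pred M => M.weight + 1
  | .succ M => M.weight + 1
  | .ifz L M N => L.weight + M.weight + N.weight + 1

theorem Tm.one_le_weight (M : Tm) : 1 ≤ M.weight := by
  induction M with
  | esub M x N ihM _ => exact Nat.mul_pos ihM N.weight.succ_pos
  | _ => simp [Tm.weight]

def subsWeight (σ : Subs) : ℕ := (σ.map fun p => p.2.weight + 1).prod

theorem weight_applySubs (M : Tm) (σ : Subs) :
    (applySubs M σ).weight = M.weight * subsWeight σ := by
  induction σ generalizing M with
  | nil => simp [applySubs, subsWeight]
  | cons p σ ih => simp [applySubs, subsWeight, ih, Tm.weight, mul_assoc]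

theorem weight_lt_subsWeight {σ : Subs} {p : String × Tm} (hp : p ∈ σ) :
    p.2.weight < subsWeight σ := by
  have hmem : p.2.weight + 1 ∈ σ.map fun p => p.2.weight + 1 := List.mem_map_of_mem hp
  exact List.single_le_prod (fun _ h => by obtain ⟨q, -, rfl⟩ := List.mem_map.1 h; omega) _ hmem

theorem two_le_subsWeight {σ : Subs} (hσ : σ ≠ []) : 2 ≤ subsWeight σ := by
  obtain ⟨p, hp⟩ := List.exists_mem_of_ne_nil σ hσ
  have := weight_lt_subsWeight hp
  have := p.2.one_le_weight
  omega

theorem mem_of_lookupS_eq_some {x : String} {N : Tm} {σ : Subs} (h : lookupS x σ = some N) :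
    (x, N) ∈ σ := by
  induction σ with
  | nil => simp [lookupS] at h
  | cons p σ ih =>
    obtain ⟨y, P⟩ := p
    by_cases hxy : x = y
    · simp_all [lookupS]
    · simp only [lookupS, if_neg hxy] at h
      exact List.mem_cons_of_mem _ (ih h)

theorem PrRedex.weight_lt {A B : Tm} (h : PrRedex A B) : B.weight < A.weight := by
  cases h with
  | var_hit x N σ _ _ h =>
    simpa [weight_applySubs, Tm.weight] using weight_lt_subsWeight (mem_of_lookupS_eq_some h)
  | var_miss | zeroS =>
    simp only [weight_applySubs, Tm.weight]
    linarith [two_le_subsWeight ‹_›]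
  | appS M N σ hσ | predS M σ hσ | succS M σ hσ | fixS M σ hσ | ifzS L M N σ hσ =>
    simp only [weight_applySubs, Tm.weight]
    nlinarith [two_le_subsWeight hσ, M.one_le_weight]

theorem weight_fill_lt {A B : Tm} (h : B.weight < A.weight) (E : ECtx) :
    (fill E B).weight < (fill E A).weight := by
  induction E <;> simp only [fill, Tm.weight] <;> omega

theorem PrStep.weight_lt {M N : Tm} (h : PrStep M N) : N.weight < M.weight := by
  obtain ⟨E, A, B, hr, rfl, rfl⟩ := h
  exact weight_fill_lt hr.weight_lt E

theorem subst_eq_self_of_notMem_fv {x : String} {Q M : Tm} (h : x ∉ fv M) : subst x Q M = M := by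
  induction M <;> grind [fv, subst]

theorem fv_subst_subset (x : String) (Q M : Tm) : fv (subst x Q M) ⊆ fv M \ {x} ∪ fv Q := by
  induction M <;> grind [fv, subst]

theorem fv_collapse_subset (M : Tm) : fv (collapse M) ⊆ fv M := by
  induction M with
  | esub M y N ihM ihN =>
    refine (fv_subst_subset _ _ _).trans ?_
    simp only [fv]
    gcongr
  | _ => simp only [fv, collapse]; gcongr

def substAll (σ : Subs) (P : Tm) : Tm := σ.foldl (fun P p => subst p.1 (collapse p.2) P) P

@[simp] theorem substAll_nil (P : Tm) : substAll [] P = P := rfl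

theorem substAll_cons (p : String × Tm) (σ : Subs) (P : Tm) :
    substAll (p :: σ) P = substAll σ (subst p.1 (collapse p.2) P) := rfl

theorem collapse_applySubs (M : Tm) (σ : Subs) :
    collapse (applySubs M σ) = substAll σ (collapse M) := by
  induction σ generalizing M with
  | nil => rfl
  | cons p σ ih => exact ih _

section substAll

variable (σ : Subs)

@[simp] theorem substAll_zero : substAll σ .zero = .zero := by
  induction σ <;> simp [substAll_cons, subst, *]

@[simp] theorem substAll_app (P Q : Tm) :
    substAll σ (.app P Q) = .app (substAll σ P) (substAll σ Q) := by
  induction σ generalizing P Q <;> simp [substAll_cons, subst, *]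

@[simp] theorem substAll_fixp (P : Tm) : substAll σ (.fixp P) = .fixp (substAll σ P) := by
  induction σ generalizing P <;> simp [substAll_cons, subst, *]

@[simp] theorem substAll_pred (P : Tm) : substAll σ (.pred P) = .pred (substAll σ P) := by
  induction σ generalizing P <;> simp [substAll_cons, subst, *]

@[simp] theorem substAll_succ (P : Tm) : substAll σ (.succ P) = .succ (substAll σ P) := by
  induction σ generalizing P <;> simp [substAll_cons, subst, *]

@[simp] theorem substAll_ifz (L P Q : Tm) :
    substAll σ (.ifz L P Q) = .ifz (substAll σ L) (substAll σ P) (substAll σ Q) := by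
  induction σ generalizing L P Q <;> simp [substAll_cons, subst, *]

theorem substAll_lam {x : String} (hx : x ∉ σ.map Prod.fst) (P : Tm) :
    substAll σ (.lam x P) = .lam x (substAll σ P) := by
  induction σ generalizing P with
  | nil => rfl
  | cons p σ ih =>
    simp only [List.map_cons, List.mem_cons, not_or] at hx
    simp [substAll_cons, subst, hx.1, ih hx.2]

theorem substAll_eq_self {P : Tm} (hP : fv P = ∅) : substAll σ P = P := by
  induction σ with
  | nil => rfl
  | cons p σ ih => simpa [substAll_cons, subst_eq_self_of_notMem_fv, hP] using ih

theorem substAll_var_of_lookupS_eq_some {x : String} {N : Tm} (h : lookupS x σ = some N)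
    (hσ : ∀ p ∈ σ, fv p.2 = ∅) : substAll σ (.var x) = collapse N := by
  induction σ with
  | nil => simp [lookupS] at h
  | cons p σ ih =>
    obtain ⟨y, P⟩ := p
    by_cases hxy : x = y
    · simp only [lookupS, if_pos hxy, Option.some.injEq] at h
      subst h
      have hN : fv (collapse P) = ∅ :=
        Finset.subset_empty.1 ((fv_collapse_subset P).trans (hσ _ List.mem_cons_self).le)
      simp [substAll_cons, subst, hxy, substAll_eq_self _ hN]
    · simp only [lookupS, if_neg hxy] at h
      simpa [substAll_cons, subst, hxy] using ih h fun q hq => hσ q (List.mem_cons_of_mem _ hq)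

theorem substAll_var_of_lookupS_eq_none {x : String} (h : lookupS x σ = none) :
    substAll σ (.var x) = .var x := by
  induction σ with
  | nil => rfl
  | cons p σ ih =>
    obtain ⟨y, P⟩ := p
    by_cases hxy : x = y
    · simp [lookupS, hxy] at h
    · simp only [lookupS, if_neg hxy] at h
      simpa [substAll_cons, subst, hxy] using ih h

end substAll

theorem closedSubs_applySubs {M : Tm} {σ : Subs} (h : closedSubs (applySubs M σ)) :
    closedSubs M ∧ ∀ p ∈ σ, fv p.2 = ∅ := by
  induction σ generalizing M with
  | nil => exact ⟨h, by simp⟩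
  | cons p σ ih =>
    obtain ⟨⟨hM, -, hp⟩, hσ⟩ := ih h
    exact ⟨hM, List.forall_mem_cons.2 ⟨hp, hσ⟩⟩

theorem closedSubs_of_fill {E : ECtx} {A : Tm} (h : closedSubs (fill E A)) : closedSubs A := by
  induction E with
  | hole => exact h
  | appL E P ih | ifz E P _ ih => exact ih h.1
  | pred E ih | succ E ih => exact ih h

def ECtx.collapse : ECtx → ECtx
  | .hole => .hole
  | .appL E P => .appL E.collapse (_root_.collapse P)
  | .pred E => .pred E.collapse
  | .succ E => .succ E.collapse
  | .ifz E P Q => .ifz E.collapse (_root_.collapse P) (_root_.collapse Q)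

theorem collapse_fill (E : ECtx) (A : Tm) : collapse (fill E A) = fill E.collapse (collapse A) := by
  induction E <;> simp [fill, ECtx.collapse, collapse, *]

theorem collapse_numeral (n : ℕ) : collapse (numeral n) = numeral n := by
  induction n <;> simp [numeral, collapse, *]

theorem PrRedex.collapse_eq {A B : Tm} (h : PrRedex A B) (hA : closedSubs A) :
    collapse A = collapse B := by
  cases h with
  | var_hit x N σ _ _ h =>
    rw [collapse_applySubs]
    exact substAll_var_of_lookupS_eq_some σ h (closedSubs_applySubs hA).2
  | var_miss x σ _ _ h =>
    rw [collapse_applySubs]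
    exact substAll_var_of_lookupS_eq_none σ h
  | _ => simp [collapse_applySubs, collapse]

theorem PrStep.collapse_eq {M N : Tm} (h : PrStep M N) (hM : closedSubs M) :
    collapse M = collapse N := by
  obtain ⟨E, A, B, hr, rfl, rfl⟩ := h
  rw [collapse_fill, collapse_fill, hr.collapse_eq (closedSubs_of_fill hM)]

def headSubs : Tm → Subs
  | .esub M x N => headSubs M ++ [(x, N)]
  | _ => []

theorem headSubs_applySubs (M : Tm) (σ : Subs) : headSubs (applySubs M σ) = headSubs M ++ σ := by
  induction σ generalizing M with
  | nil => simp [applySubs]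
  | cons p σ ih => simp [applySubs, ih, headSubs]

theorem applySubs_concat (M : Tm) (σ : Subs) (x : String) (N : Tm) :
    applySubs M (σ ++ [(x, N)]) = .esub (applySubs M σ) x N := by
  induction σ generalizing M with
  | nil => rfl
  | cons p σ ih => exact ih _

def HeadClash : Tm → Prop
  | .app M _ => HeadClash M
  | .pred M => HeadClash M
  | .succ M => HeadClash M
  | .ifz L _ _ => HeadClash L
  | .esub M x N => ¬ ((headSubs M ++ [(x, N)]).map Prod.fst).Nodup
  | _ => False

theorem headClash_applySubs {σ : Subs} (hσ : σ ≠ []) (M : Tm) :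
    HeadClash (applySubs M σ) ↔ ¬ ((headSubs M ++ σ).map Prod.fst).Nodup := by
  obtain ⟨σ, ⟨x, N⟩, rfl⟩ := (List.eq_nil_or_concat σ).resolve_left hσ
  simp [applySubs_concat, HeadClash, headSubs_applySubs]

theorem headClash_fill (E : ECtx) (A : Tm) : HeadClash (fill E A) ↔ HeadClash A := by
  induction E <;> simp [fill, HeadClash, *]

theorem not_headClash_numeral (n : ℕ) : ¬ HeadClash (numeral n) := by
  induction n <;> simp [numeral, HeadClash, *]

theorem CrRedex.not_headClash {A B : Tm} (h : CrRedex A B) : ¬ HeadClash A := by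
  cases h with
  | beta x M N σ hk =>
    rcases eq_or_ne σ [] with rfl | hσ
    · simp [HeadClash, applySubs]
    · simpa [HeadClash, headClash_applySubs hσ, headSubs, keysDistinct] using hk
  | pred_succ n | ifz_succ n => simpa [HeadClash] using not_headClash_numeral (n + 1)
  | _ => simp [HeadClash]

theorem PrRedex.not_headClash {A B : Tm} (h : PrRedex A B) : ¬ HeadClash A := by
  cases h <;> simpa [headClash_applySubs ‹_›, headSubs]

theorem WhStep.not_headClash {M N : Tm} (h : WhStep M N) : ¬ HeadClash M := by
  rcases h with ⟨E, A, B, hr, rfl, -⟩ | ⟨E, A, B, hr, rfl, -⟩ <;>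
    simpa [headClash_fill] using hr.not_headClash

theorem CrRedex.pcfRedex_collapse_or_headClash {A B : Tm} (h : CrRedex A B) :
    PcfRedex (collapse A) (collapse B) ∨ HeadClash B := by
  cases h with
  | beta x M N σ _ =>
    by_cases hx : x ∈ σ.map Prod.fst
    · right
      simp only [HeadClash, headSubs_applySubs, List.map_append]
      rw [List.nodup_append]
      exact fun h => h.2.2 x (by simp [hx]) x (by simp) rfl
    · left
      simp only [collapse, collapse_applySubs, substAll_lam σ hx]
      exact .beta ..
  | pred_zero => exact .inl .pred_zero
  | pred_succ n => simpa [collapse, collapse_numeral] using .inl (.pred_succ n)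
  | ifz_zero M N => exact .inl (.ifz_zero ..)
  | ifz_succ n M N => simpa [collapse, collapse_numeral] using .inl (.ifz_succ n ..)
  | fix_unfold M => exact .inl (.fix_unfold _)

theorem CrStep.pcfStep_collapse_or_headClash {M N : Tm} (h : CrStep M N) :
    PcfStep (collapse M) (collapse N) ∨ HeadClash N := by
  obtain ⟨E, A, B, hr, rfl, rfl⟩ := h
  rw [headClash_fill, collapse_fill, collapse_fill]
  exact hr.pcfRedex_collapse_or_headClash.imp_left fun hp => ⟨E.collapse, _, _, hp, rfl, rfl⟩

theorem exists_pcfStep_of_whStep_chain (f : ℕ → Tm) (hf : ∀ n, closedSubs (f n))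
    (hred : ∀ n, WhStep (f n) (f (n + 1))) (i : ℕ) :
    ∃ j, i < j ∧ WhSteps (f i) (f j) ∧ PcfStep (collapse (f i)) (collapse (f j)) := by
  induction h : (f i).weight using Nat.strong_induction_on generalizing i with
  | _ w ih =>
  rcases hred i with hcr | hpr
  · exact ⟨i + 1, i.lt_succ_self, .single (.inl hcr),
      hcr.pcfStep_collapse_or_headClash.resolve_right (hred (i + 1)).not_headClash⟩
  · obtain ⟨j, hij, hsteps, hpcf⟩ := ih _ (h ▸ hpr.weight_lt) (i + 1) rfl
    exact ⟨j, by omega, .head (.inr hpr) hsteps, by rwa [hpr.collapse_eq (hf i)]⟩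

/-- Along any infinite weak head reduction sequence of EPCF programs, from each
index `i` there is a later index `j` whose collapse is one PCF step away;
consequently the collapse of the first program has an infinite PCF reduction
path. -/
theorem stmt_12 (f : ℕ → Tm) (hprog : ∀ n, IsProgram (f n))
    (hred : ∀ n, WhStep (f n) (f (n + 1))) :
    (∀ i, ∃ j, i < j ∧ WhSteps (f i) (f j) ∧
      PcfStep (collapse (f i)) (collapse (f j))) ∧
    (∃ g : ℕ → Tm, g 0 = collapse (f 0) ∧ ∀ n, PcfStep (g n) (g (n + 1))) := by
  have later_pcfStep := exists_pcfStep_of_whStep_chain f (fun n => (hprog n).2) hred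
  refine ⟨later_pcfStep, ?_⟩
  choose next _ _ hnext using later_pcfStep
  refine ⟨fun n => collapse (f (next^[n] 0)), rfl, fun n => ?_⟩
  simpa only [Function.iterate_succ_apply'] using hnext _
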